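/- Let t < k ≤ n/2 over a field of characteristic zero. The kernel of the inclusion matrix W_{t,k} (equivalently, the space of t-(n,k) trades), viewed as an S_n-module, decomposes as a multiplicity-free direct sum of irreducible Specht modules: ker W_{t,k} ≅ S^{(n−k,k)} ⊕ S^{(n−k+1,k−1)} ⊕ ⋯ ⊕ S^{(n−t−1,t+1)}. -/
import Mathlib


/-- The set of `j`-element subsets of `X = {1,…,n}`. -/
abbrev KSubsets (n j : ℕ) := {S : Finset (Fin n) // S.card = j}

/-- The set of `(r−1)`-element subsets of `X`, encoded so that it is empty when `r = 0`
(corresponding to the convention `M_{−1} = 0`). -/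
abbrev KSubsetsPred (n r : ℕ) := {S : Finset (Fin n) // S.card + 1 = r}

/-- The permutation module `M_j`. -/
abbrev PM (K : Type*) [Field K] (n j : ℕ) := KSubsets n j →₀ K

/-- The inclusion map `M_r → M_{r−1}` sending an `r`-subset to the sum of its
`(r−1)`-subsets (for `r = 0` the target is the zero space). -/
noncomputable def psiDown (K : Type*) [Field K] (n r : ℕ) :
    PM K n r →ₗ[K] (KSubsetsPred n r →₀ K) :=
  Finsupp.lsum K fun S : KSubsets n r => LinearMap.toSpanSingleton K (KSubsetsPred n r →₀ K)
    (∑ A : KSubsetsPred n r, if A.1 ⊆ S.1 then Finsupp.single A (1 : K) else 0)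

/-- A realization of the Specht module `S^{(n−r,r)}` in characteristic zero:
the kernel of the inclusion map `M_r → M_{r−1}`. -/
noncomputable def SpechtTwoRow (K : Type*) [Field K] (n r : ℕ) : Submodule K (PM K n r) :=
  LinearMap.ker (psiDown K n r)

/-- The map `ψ_k^{(k−t)} : M_k → M_t` (matrix the inclusion matrix `W_{t,k}`). -/
noncomputable def psiPM (K : Type*) [Field K] (n t k : ℕ) : PM K n k →ₗ[K] PM K n t :=
  Finsupp.lsum K fun S : KSubsets n k => LinearMap.toSpanSingleton K (PM K n t)
    (∑ A : KSubsets n t, if A.1 ⊆ S.1 then Finsupp.single A (1 : K) else 0)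

/-- The natural action of the symmetric group `S_n` on the permutation module `M_j`. -/
noncomputable def rhoPM (K : Type*) [Field K] (n j : ℕ) (g : Equiv.Perm (Fin n)) :
    PM K n j →ₗ[K] PM K n j :=
  Finsupp.lmapDomain K K fun S : KSubsets n j =>
    ⟨S.1.image g, by rw [Finset.card_image_of_injective _ g.injective]; exact S.2⟩


open Finset

lemma count_interval {n m : ℕ} (B C : Finset (Fin n)) (hB : B.card ≤ m) (hBC : B ⊆ C) :
    (Finset.univ.filter (fun R : KSubsets n m => B ⊆ R.1 ∧ R.1 ⊆ C)).card
      = (C.card - B.card).choose (m - B.card) := by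
  rw [← Finset.card_sdiff_of_subset hBC, ← Finset.card_powersetCard]
  apply Finset.card_bij (fun R _ => R.1 \ B)
  · rintro ⟨R, hR⟩ hmem
    simp only [Finset.mem_filter, Finset.mem_univ, true_and] at hmem
    simp only [Finset.mem_powersetCard]
    exact ⟨Finset.sdiff_subset_sdiff hmem.2 (le_refl _), by
      rw [Finset.card_sdiff_of_subset hmem.1, hR]⟩
  · rintro ⟨R1, h1⟩ hm1 ⟨R2, h2⟩ hm2 heq
    simp only [Finset.mem_filter, Finset.mem_univ, true_and] at hm1 hm2
    ext1
    have := congrArg (fun s => s ∪ B) heq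
    simpa [Finset.sdiff_union_of_subset hm1.1, Finset.sdiff_union_of_subset hm2.1] using this
  · intro P hP
    simp only [Finset.mem_powersetCard] at hP
    have hdisj : Disjoint P B := (Finset.subset_sdiff.mp hP.1).2
    have hcard : (P ∪ B).card = m := by
      rw [Finset.card_union_of_disjoint hdisj, hP.2]; omega
    refine ⟨⟨P ∪ B, hcard⟩, ?_, ?_⟩
    · simp only [Finset.mem_filter, Finset.mem_univ, true_and]
      exact ⟨Finset.subset_union_right, Finset.union_subset (hP.1.trans (Finset.sdiff_subset)) hBC⟩
    · simp [Finset.union_sdiff_distrib, Finset.sdiff_eq_self_of_disjoint hdisj]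

lemma count_empty₁ {n m : ℕ} {B C : Finset (Fin n)} (h : ¬ B ⊆ C) :
    (Finset.univ.filter (fun R : KSubsets n m => B ⊆ R.1 ∧ R.1 ⊆ C)).card = 0 := by
  rw [Finset.card_eq_zero, Finset.filter_eq_empty_iff]
  rintro R -
  rintro ⟨h1, h2⟩
  exact h (h1.trans h2)

lemma count_empty₂ {n m : ℕ} {B C : Finset (Fin n)} (h : m < B.card) :
    (Finset.univ.filter (fun R : KSubsets n m => B ⊆ R.1 ∧ R.1 ⊆ C)).card = 0 := by
  rw [Finset.card_eq_zero, Finset.filter_eq_empty_iff]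
  rintro R -
  rintro ⟨h1, h2⟩
  have := (Finset.card_le_card h1).trans_eq R.2
  omega

section Entry
variable {K : Type*} [Field K]

lemma sum_ite_single_apply {ι : Type*} [Fintype ι] [DecidableEq ι] (p : ι → Prop)
    [DecidablePred p] (c : K) (T : ι) :
    (∑ A : ι, if p A then Finsupp.single A c else 0) T = if p T then c else 0 := by
  rw [Finsupp.finset_sum_apply]
  have : ∀ A : ι, (if p A then Finsupp.single A c else 0) T
      = if A = T then (if p A then c else 0) else 0 := by
    intro A
    split_ifs with h1 h2 h2 <;> simp [Finsupp.single_apply, h1, h2]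
  rw [Finset.sum_congr rfl fun A _ => this A, Finset.sum_ite_eq' Finset.univ T]
  simp

/-- Generic "matrix entry" computation for compositions. -/
lemma apply_sum_entry {α β : Type*} [Fintype α] [Fintype β] [DecidableEq α] [DecidableEq β]
    (L : (α →₀ K) →ₗ[K] (β →₀ K)) (q : β → α → Prop) [∀ b a, Decidable (q b a)]
    (HL : ∀ (a : α) (c : K), L (Finsupp.single a c) = ∑ b : β, if q b a then Finsupp.single b c else 0)
    (p : α → Prop) [DecidablePred p] (c : K) (T : β) :
    (L (∑ a : α, if p a then Finsupp.single a c else 0)) T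
      = ((Finset.univ.filter fun a => q T a ∧ p a).card : K) * c := by
  rw [map_sum, Finsupp.finset_sum_apply]
  have : ∀ a : α, (L (if p a then Finsupp.single a c else 0)) T
      = if q T a ∧ p a then c else 0 := by
    intro a
    rw [apply_ite L, map_zero, apply_ite (fun f : β →₀ K => f T)]
    rw [HL, sum_ite_single_apply]
    simp only [Finsupp.coe_zero, Pi.zero_apply]
    split_ifs with h1 h2 h2 <;> simp_all
  rw [Finset.sum_congr rfl fun a _ => this a]
  rw [← Finset.sum_filter, Finset.sum_const, nsmul_eq_mul]

end Entry

section Ops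
variable (K : Type*) [Field K] (n : ℕ)

/-- The "up" operator sending an `r`-subset to the sum of the `(r+1)`-subsets containing it. -/
noncomputable def Uop (r : ℕ) : PM K n r →ₗ[K] PM K n (r + 1) :=
  Finsupp.lsum K fun S : KSubsets n r => LinearMap.toSpanSingleton K (PM K n (r + 1))
    (∑ A : KSubsets n (r + 1), if S.1 ⊆ A.1 then Finsupp.single A (1 : K) else 0)

/-- The single-step "down" operator. -/
noncomputable abbrev Dop (r : ℕ) : PM K n (r + 1) →ₗ[K] PM K n r := psiPM K n r (r + 1)

variable {K n}

lemma smul_ite_single {ι : Type*} [Fintype ι] (p : ι → Prop) [DecidablePred p] (c : K) :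
    c • (∑ A : ι, if p A then Finsupp.single A (1:K) else 0)
      = ∑ A : ι, if p A then Finsupp.single A c else 0 := by
  rw [Finset.smul_sum]
  refine Finset.sum_congr rfl fun A _ => ?_
  rw [smul_ite, smul_zero, Finsupp.smul_single, smul_eq_mul, mul_one]

lemma psiPM_single (t k : ℕ) (S : KSubsets n k) (c : K) :
    psiPM K n t k (Finsupp.single S c)
      = ∑ A : KSubsets n t, if A.1 ⊆ S.1 then Finsupp.single A c else 0 := by
  rw [psiPM, Finsupp.lsum_single, LinearMap.toSpanSingleton_apply, smul_ite_single]

lemma Uop_single (r : ℕ) (S : KSubsets n r) (c : K) :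
    Uop K n r (Finsupp.single S c)
      = ∑ A : KSubsets n (r + 1), if S.1 ⊆ A.1 then Finsupp.single A c else 0 := by
  rw [Uop, Finsupp.lsum_single, LinearMap.toSpanSingleton_apply, smul_ite_single]

lemma psiDown_single (r : ℕ) (S : KSubsets n r) (c : K) :
    psiDown K n r (Finsupp.single S c)
      = ∑ A : KSubsetsPred n r, if A.1 ⊆ S.1 then Finsupp.single A c else 0 := by
  rw [psiDown, Finsupp.lsum_single, LinearMap.toSpanSingleton_apply, smul_ite_single]

lemma rhoPM_single (j : ℕ) (g : Equiv.Perm (Fin n)) (S : KSubsets n j) (c : K) :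
    rhoPM K n j g (Finsupp.single S c)
      = Finsupp.single ⟨S.1.image g, by
          rw [Finset.card_image_of_injective _ g.injective]; exact S.2⟩ c := by
  rw [rhoPM, Finsupp.lmapDomain_apply, Finsupp.mapDomain_single]

end Ops

section Identities
variable {K : Type*} [Field K] {n : ℕ}

lemma psiPM_id (r : ℕ) : psiPM K n r r = LinearMap.id := by
  apply Finsupp.lhom_ext
  intro S c
  rw [psiPM_single]
  apply Finsupp.ext; intro T
  rw [sum_ite_single_apply, LinearMap.id_apply, Finsupp.single_apply]
  congr 1
  apply propext
  constructor
  · intro h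
    exact Subtype.ext (Finset.eq_of_subset_of_card_le h (by rw [S.2, T.2])).symm
  · rintro rfl; exact Finset.Subset.refl _

lemma psiPM_comp (r m : ℕ) :
    (psiPM K n r (r + m)) ∘ₗ (psiPM K n (r + m) (r + m + 1))
      = ((m + 1 : ℕ) : K) • psiPM K n r (r + m + 1) := by
  apply Finsupp.lhom_ext
  intro S c
  apply Finsupp.ext; intro T
  rw [LinearMap.comp_apply, psiPM_single,
    apply_sum_entry (psiPM K n r (r + m)) (fun b a => b.1 ⊆ a.1) (fun a c => psiPM_single _ _ a c)]
  rw [LinearMap.smul_apply, Finsupp.smul_apply, psiPM_single, sum_ite_single_apply]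
  by_cases hTS : T.1 ⊆ S.1
  · have : (Finset.univ.filter fun a : KSubsets n (r+m) => T.1 ⊆ a.1 ∧ a.1 ⊆ S.1).card
        = (m + 1).choose m := by
      rw [count_interval T.1 S.1 (by rw [T.2]; omega) hTS, T.2, S.2]
      congr 1 <;> omega
    rw [this, if_pos hTS, Nat.choose_succ_self_right]
    rw [smul_eq_mul]
  · have : (Finset.univ.filter fun a : KSubsets n (r+m) => T.1 ⊆ a.1 ∧ a.1 ⊆ S.1).card = 0 := by
      rw [Finset.card_eq_zero, Finset.filter_eq_empty_iff]
      rintro A - ⟨h1, h2⟩; exact hTS (h1.trans h2)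
    rw [this, if_neg hTS]
    simp

lemma comm_DU (s : ℕ) :
    (Dop K n (s + 1)) ∘ₗ (Uop K n (s + 1))
      = (Uop K n s) ∘ₗ (Dop K n s) + (((n : K) - 2 * (s + 1)) • LinearMap.id) := by
  apply Finsupp.lhom_ext
  intro S c
  apply Finsupp.ext; intro T
  have hS : S.1.card = s + 1 := S.2
  have hT : T.1.card = s + 1 := T.2
  have hSn : s + 1 ≤ n := by
    have := Finset.card_le_card (Finset.subset_univ S.1)
    rwa [hS, Finset.card_fin] at this
  rw [LinearMap.comp_apply, Uop_single,
    apply_sum_entry (Dop K n (s+1)) (fun b a => b.1 ⊆ a.1) (fun a c => psiPM_single _ _ a c)]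
  rw [LinearMap.add_apply, Finsupp.add_apply, LinearMap.comp_apply, psiPM_single,
    apply_sum_entry (Uop K n s) (fun b a => a.1 ⊆ b.1) (fun a c => Uop_single _ a c)]
  rw [LinearMap.smul_apply, LinearMap.id_apply, Finsupp.smul_apply,
    Finsupp.single_apply]
  -- LHS count: (r+2)-sets containing S ∪ T ; RHS count: s-sets contained in S ∩ T
  have hL : (Finset.univ.filter fun a : KSubsets n (s+1+1) => T.1 ⊆ a.1 ∧ S.1 ⊆ a.1).card
      = (Finset.univ.filter fun a : KSubsets n (s+1+1) => (S.1 ∪ T.1) ⊆ a.1 ∧ a.1 ⊆ Finset.univ).card := by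
    congr 1; apply Finset.filter_congr; intro A _
    simp only [Finset.union_subset_iff, Finset.subset_univ, and_true]
    tauto
  have hR : (Finset.univ.filter fun a : KSubsets n s => a.1 ⊆ T.1 ∧ a.1 ⊆ S.1).card
      = (Finset.univ.filter fun a : KSubsets n s => (∅ : Finset (Fin n)) ⊆ a.1 ∧ a.1 ⊆ S.1 ∩ T.1).card := by
    congr 1; apply Finset.filter_congr; intro A _
    simp only [Finset.empty_subset, true_and, Finset.subset_inter_iff]
    tauto
  rw [hL, hR]
  have hcard : (S.1 ∪ T.1).card + (S.1 ∩ T.1).card = 2 * s + 2 := by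
    rw [Finset.card_union_add_card_inter, hS, hT]; ring
  have hcu : (Finset.univ : Finset (Fin n)).card = n := by
    rw [Finset.card_univ, Fintype.card_fin]
  by_cases hST : S = T
  · subst hST
    rw [Finset.union_self, Finset.inter_self]
    rw [count_interval _ _ (by omega) (Finset.subset_univ _),
      count_interval _ _ (by rw [Finset.card_empty]; omega) (Finset.empty_subset _)]
    rw [hcu, hS, Finset.card_empty, if_pos rfl]
    rw [show s + 1 + 1 - (s+1) = 1 by omega, Nat.choose_one_right,
      Nat.sub_zero, Nat.sub_zero, Nat.choose_succ_self_right]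
    rw [Nat.cast_sub hSn]
    push_cast
    rw [smul_eq_mul]
    ring
  · rw [if_neg hST]
    have hTS : ¬ T.1 ⊆ S.1 := by
      intro h
      exact hST (Subtype.ext (Finset.eq_of_subset_of_card_le h (by omega)).symm)
    have hu : s + 1 < (S.1 ∪ T.1).card := by
      have h' : S.1 ⊂ S.1 ∪ T.1 := by
        rw [Finset.ssubset_iff_subset_ne]
        refine ⟨Finset.subset_union_left, fun hsub => hTS ?_⟩
        exact (Finset.subset_union_right).trans hsub.ge
      have h'' := Finset.card_lt_card h'
      omega
    rcases Nat.lt_or_ge (s + 1 + 1) (S.1 ∪ T.1).card with hu2 | hu2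
    · rw [count_empty₂ hu2,
        count_interval _ _ (by rw [Finset.card_empty]; omega) (Finset.empty_subset _),
        Finset.card_empty, Nat.sub_zero, Nat.sub_zero, Nat.choose_eq_zero_of_lt (by omega)]
      push_cast
      rw [smul_eq_mul]
      ring
    · have hu3 : (S.1 ∪ T.1).card = s + 1 + 1 := by omega
      rw [count_interval _ _ (by omega) (Finset.subset_univ _),
        count_interval _ _ (by rw [Finset.card_empty]; omega) (Finset.empty_subset _)]
      rw [hu3, Finset.card_empty, Nat.sub_zero, Nat.sub_zero, Nat.sub_self, Nat.choose_zero_right,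
        show (S.1 ∩ T.1).card = s by omega, Nat.choose_self]
      push_cast
      rw [smul_eq_mul]
      ring

end Identities

section Equivariance
variable {K : Type*} [Field K] {n : ℕ}

def gEquiv (g : Equiv.Perm (Fin n)) (j : ℕ) : KSubsets n j ≃ KSubsets n j where
  toFun S := ⟨S.1.image g, by rw [Finset.card_image_of_injective _ g.injective]; exact S.2⟩
  invFun S := ⟨S.1.image g.symm, by
    rw [Finset.card_image_of_injective _ g.symm.injective]; exact S.2⟩
  left_inv S := by ext x; simp
  right_inv S := by ext x; simp

lemma rhoPM_single' (j : ℕ) (g : Equiv.Perm (Fin n)) (S : KSubsets n j) (c : K) :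
    rhoPM K n j g (Finsupp.single S c) = Finsupp.single (gEquiv g j S) c :=
  rhoPM_single j g S c

lemma gEquiv_subset_iff (g : Equiv.Perm (Fin n)) {j j' : ℕ} (A : KSubsets n j)
    (S : KSubsets n j') : (gEquiv g j A).1 ⊆ (gEquiv g j' S).1 ↔ A.1 ⊆ S.1 :=
  Finset.image_subset_image_iff g.injective

lemma rho_psi (t k : ℕ) (g : Equiv.Perm (Fin n)) :
    (psiPM K n t k).comp (rhoPM K n k g) = (rhoPM K n t g).comp (psiPM K n t k) := by
  apply Finsupp.lhom_ext; intro S c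
  rw [LinearMap.comp_apply, LinearMap.comp_apply, rhoPM_single', psiPM_single, psiPM_single,
    map_sum]
  refine (Fintype.sum_equiv (gEquiv g t) _ _ fun A => ?_).symm
  rw [apply_ite (rhoPM K n t g), map_zero, rhoPM_single']
  rw [if_congr (gEquiv_subset_iff g A S).symm rfl rfl]

lemma rho_U (r : ℕ) (g : Equiv.Perm (Fin n)) :
    (Uop K n r).comp (rhoPM K n r g) = (rhoPM K n (r+1) g).comp (Uop K n r) := by
  apply Finsupp.lhom_ext; intro S c
  rw [LinearMap.comp_apply, LinearMap.comp_apply, rhoPM_single', Uop_single, Uop_single,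
    map_sum]
  refine (Fintype.sum_equiv (gEquiv g (r+1)) _ _ fun A => ?_).symm
  rw [apply_ite (rhoPM K n (r+1) g), map_zero, rhoPM_single']
  rw [if_congr (gEquiv_subset_iff g S A).symm rfl rfl]

end Equivariance

section Specht
variable {K : Type*} [Field K] {n : ℕ}

def predEquiv (n s : ℕ) : KSubsetsPred n (s+1) ≃ KSubsets n s where
  toFun A := ⟨A.1, Nat.succ_injective A.2⟩
  invFun A := ⟨A.1, by rw [A.2]⟩
  left_inv A := rfl
  right_inv A := rfl

lemma psiPM_eq_psiDown (s : ℕ) :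
    psiPM K n s (s+1)
      = (Finsupp.domLCongr (α₁ := KSubsetsPred n (s+1)) (M := K) (predEquiv n s)).toLinearMap
          ∘ₗ psiDown K n (s+1) := by
  apply Finsupp.lhom_ext; intro S c
  rw [LinearMap.comp_apply, LinearEquiv.coe_coe, psiDown_single, psiPM_single, map_sum]
  refine (Fintype.sum_equiv (predEquiv n s) _ _ fun A => ?_).symm
  rw [apply_ite (Finsupp.domLCongr (predEquiv n s)), map_zero, Finsupp.domLCongr_single]
  rfl

lemma spechtMem (s : ℕ) (v : PM K n (s+1)) :
    v ∈ SpechtTwoRow K n (s+1) ↔ psiPM K n s (s+1) v = 0 := by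
  rw [SpechtTwoRow, LinearMap.mem_ker, psiPM_eq_psiDown, LinearMap.comp_apply]
  exact (LinearEquiv.map_eq_zero_iff _).symm

end Specht

section FmapSec
variable (K : Type*) [Field K] (n : ℕ)

/-- Coefficient appearing when the down operator hits a raised Specht vector. -/
noncomputable def gam (r m jv : ℕ) : K := ((m : K) - jv) * ((n : K) - 2*r - m - jv - 1)

/-- The sum-of-raised-Specht-vectors map. -/
noncomputable def Fmap (r : ℕ) :
    (m : ℕ) → ((j : Fin m) → SpechtTwoRow K n (r + ↑j + 1)) →ₗ[K] PM K n (r + m)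
  | 0 => 0
  | (m+1) =>
      (Uop K n (r+m)) ∘ₗ (Fmap r m) ∘ₗ
          (LinearMap.pi fun j : Fin m => LinearMap.proj j.castSucc)
        + (SpechtTwoRow K n (r+m+1)).subtype ∘ₗ LinearMap.proj (Fin.last m)

variable {K n}

lemma Fmap_zero (r : ℕ) (w) : Fmap K n r 0 w = 0 := rfl

lemma Fmap_succ (r m : ℕ) (w : (j : Fin (m+1)) → SpechtTwoRow K n (r + ↑j + 1)) :
    Fmap K n r (m+1) w
      = Uop K n (r+m) (Fmap K n r m fun j => w j.castSucc)
        + ((w (Fin.last m)).1 : PM K n (r+m+1)) :=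
  rfl

lemma Dstep (r : ℕ) : ∀ (m : ℕ) (w : (j : Fin (m+1)) → SpechtTwoRow K n (r + ↑j + 1)),
    Dop K n (r + m) (Fmap K n r (m+1) w)
      = Fmap K n r m (fun j => gam K n r m ↑j • w j.castSucc) := by
  intro m
  induction m with
  | zero =>
    intro w
    rw [Fmap_succ, map_add]
    simp only [Fmap_zero, map_zero, zero_add]
    exact (spechtMem r ((w (Fin.last 0)).1 : PM K n (r+1))).mp (w (Fin.last 0)).2
  | succ m ih =>
    intro w
    have hw_last : Dop K n (r+(m+1)) ((w (Fin.last (m+1))).1 : PM K n (r+(m+1)+1)) = 0 :=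
      (spechtMem (r+m+1) ((w (Fin.last (m+1))).1 : PM K n (r+m+1+1))).mp (w (Fin.last (m+1))).2
    rw [Fmap_succ, map_add, hw_last, add_zero]
    have hcomm := congrArg (fun L => L (Fmap K n r (m+1) (fun j => w j.castSucc)))
      (comm_DU (K := K) (n := n) (r+m))
    simp only [LinearMap.comp_apply, LinearMap.add_apply, LinearMap.smul_apply,
      LinearMap.id_apply] at hcomm
    have hcomm' : (Dop K n (r+(m+1))) ((Uop K n (r+(m+1)))
          ((Fmap K n r (m+1)) fun j => w j.castSucc))
        = (id ((Uop K n (r+m)) ((Dop K n (r+m)) ((Fmap K n r (m+1)) fun j => w j.castSucc)))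
            : PM K n (r+(m+1)))
          + ((n:K) - 2*((r+m : ℕ) + 1 : K)) • ((Fmap K n r (m+1)) fun j => w j.castSucc) :=
      hcomm
    rw [hcomm', ih (fun j => w j.castSucc)]
    rw [Fmap_succ r m, Fmap_succ r m]
    rw [smul_add, ← map_smul (Uop K n (r+m))]
    simp only [id_eq]
    rw [← map_smul (Fmap K n r m)]
    have h1 : ((Fmap K n r m) fun j : Fin m => gam K n r m ↑j • w j.castSucc.castSucc)
        + (Fmap K n r m) (((n:K) - 2 * (((r+m : ℕ) : K) + 1))
            • fun j : Fin m => w j.castSucc.castSucc)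
        = (Fmap K n r m) fun j : Fin m => gam K n r (m+1) ↑j.castSucc • w j.castSucc.castSucc := by
      rw [← map_add]
      congr 1
      funext i
      apply Subtype.ext
      simp only [Pi.add_apply, Pi.smul_apply, Submodule.coe_add, SetLike.val_smul,
        Submodule.coe_smul, Fin.coe_castSucc]
      rw [← add_smul]
      congr 1
      simp only [gam, Fin.coe_castSucc]
      push_cast
      ring
    have h2 : ((n:K) - 2 * (((r+m : ℕ) : K) + 1)) • ((w (Fin.last m).castSucc).1 : PM K n (r+(m+1)))
        = ((gam K n r (m+1) ↑(Fin.last m) • w (Fin.last m).castSucc).1 : PM K n (r+(m+1))) := by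
      rw [SetLike.val_smul]
      congr 1
      simp only [gam, Fin.val_last]
      push_cast
      ring
    rw [← h1, map_add, ← h2]
    abel

end FmapSec

section DpowSec
variable (K : Type*) [Field K] (n : ℕ)

noncomputable def Dpow (r : ℕ) : (m : ℕ) → PM K n (r + m) →ₗ[K] PM K n r
  | 0 => LinearMap.id
  | (m+1) => (Dpow r m) ∘ₗ (Dop K n (r + m))

variable {K n}

lemma Dpow_succ (r m : ℕ) : Dpow K n r (m+1) = (Dpow K n r m) ∘ₗ (Dop K n (r + m)) := rfl

lemma Dpow_eq_psiPM (r : ℕ) : ∀ m : ℕ, Dpow K n r m = ((m.factorial : ℕ) : K) • psiPM K n r (r + m) := by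
  intro m
  induction m with
  | zero =>
    simp only [Nat.factorial_zero, Nat.cast_one, one_smul]
    exact (psiPM_id r).symm
  | succ m ih =>
    show _ = (((m+1).factorial : ℕ) : K) • psiPM K n r (r + m + 1)
    rw [Dpow_succ, ih, LinearMap.smul_comp, psiPM_comp, smul_smul]
    congr 1
    rw [Nat.factorial_succ]
    push_cast
    ring

lemma Dpow_Fmap (r : ℕ) : ∀ (m : ℕ) w, Dpow K n r m (Fmap K n r m w) = 0 := by
  intro m
  induction m with
  | zero => intro w; rw [Fmap_zero]; simp
  | succ m ih =>
    intro w
    rw [Dpow_succ, LinearMap.comp_apply]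
    exact (congrArg (Dpow K n r m) (Dstep r m w)).trans (ih _)

lemma gam_ne_zero [CharZero K] {r m : ℕ} (h : 2*(r+m)+2 ≤ n) (j : Fin m) :
    gam K n r m ↑j ≠ 0 := by
  have hj := j.2
  have h1 : ((m : K) - ↑(j : ℕ)) = ((m - (j : ℕ) : ℕ) : K) := by
    rw [Nat.cast_sub hj.le]
  have h2 : ((n : K) - 2*r - m - ↑(j : ℕ) - 1) = ((n - (2*r + m + (j : ℕ) + 1) : ℕ) : K) := by
    rw [Nat.cast_sub (by omega)]
    push_cast
    ring
  rw [gam, h1, h2]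
  refine mul_ne_zero (Nat.cast_ne_zero.mpr (by omega)) (Nat.cast_ne_zero.mpr (by omega))

end DpowSec

section Bij
variable {K : Type*} [Field K] [CharZero K] {n : ℕ}

lemma F_inj (r : ℕ) : ∀ m : ℕ, 2*(r+m) ≤ n →
    ∀ w, Fmap K n r m w = 0 → w = 0 := by
  intro m
  induction m with
  | zero => intro _ w _; funext j; exact j.elim0
  | succ m ih =>
    intro h w hw
    have h2 : Fmap K n r m (fun j => gam K n r m ↑j • w j.castSucc) = 0 := by
      rw [← Dstep r m w, hw, map_zero]
    have h3 := ih (by omega) _ h2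
    have h4 : ∀ j : Fin m, w j.castSucc = 0 := by
      intro j
      have h5 := congrFun h3 j
      simp only [Pi.zero_apply] at h5
      rcases smul_eq_zero.mp h5 with h6 | h6
      · exact absurd h6 (gam_ne_zero (by omega) j)
      · exact h6
    have h6 : (fun j : Fin m => w j.castSucc) = 0 := funext h4
    rw [Fmap_succ, h6, map_zero, map_zero, zero_add] at hw
    funext j
    cases j using Fin.lastCases with
    | last => exact Subtype.ext hw
    | cast j => exact h4 j

lemma F_surj (r : ℕ) : ∀ m : ℕ, 2*(r+m) ≤ n →
    ∀ v : PM K n (r+m), Dpow K n r m v = 0 → ∃ w, Fmap K n r m w = v := by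
  intro m
  induction m with
  | zero =>
    intro _ v hv
    exact ⟨0, by rw [Fmap_zero]; exact hv.symm ▸ hv.symm⟩
  | succ m ih =>
    intro h v hv
    have hu : Dpow K n r m (Dop K n (r+m) v) = 0 := hv
    obtain ⟨w', hw'⟩ := ih (by omega) _ hu
    have hgam : ∀ j : Fin m, gam K n r m ↑j ≠ 0 := fun j => gam_ne_zero (by omega) j
    set z : (j : Fin m) → SpechtTwoRow K n (r+↑j+1) :=
      fun j => (gam K n r m ↑j)⁻¹ • w' j with hz
    have hDx : ∀ s : SpechtTwoRow K n (r+m+1),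
        Dop K n (r+m) (Fmap K n r (m+1) (Fin.snoc z s)) = Fmap K n r m w' := by
      intro s
      rw [Dstep r m]
      congr 1
      funext j
      rw [Fin.snoc_castSucc, hz, smul_smul, mul_inv_cancel₀ (hgam j), one_smul]
    set x := Fmap K n r (m+1) (Fin.snoc z 0) with hxdef
    have hs : Dop K n (r+m) (v - x) = 0 := by
      rw [map_sub, hDx, hw', sub_self]
    set sv : SpechtTwoRow K n (r+m+1) := ⟨v - x, (spechtMem (r+m) _).mpr hs⟩ with hsv
    refine ⟨Fin.snoc z sv, ?_⟩
    set z0 : (j : Fin m) → SpechtTwoRow K n (r+↑j+1) := 0 with hz0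
    have hsplit : (Fin.snoc z sv : (j : Fin (m+1)) → SpechtTwoRow K n (r+↑j+1))
        = Fin.snoc z 0 + Fin.snoc z0 sv := by
      funext j
      cases j using Fin.lastCases with
      | last => simp [Fin.snoc_last, hz0]
      | cast i => simp [Fin.snoc_castSucc, hz0]
    rw [hsplit, map_add]
    have h0s : Fmap K n r (m+1) (Fin.snoc z0 sv) = sv.1 := by
      rw [Fmap_succ]
      simp only [Fin.snoc_castSucc, Fin.snoc_last, hz0, Pi.zero_apply]
      have hfz : (fun j : Fin m => (0 : SpechtTwoRow K n (r + ↑j + 1))) = 0 := rfl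
      rw [hfz, map_zero, map_zero, zero_add]
    rw [h0s, ← hxdef]
    show x + (v - x) = v
    abel

lemma F_equiv (r : ℕ) (g : Equiv.Perm (Fin n)) : ∀ (m : ℕ)
    (w w' : (j : Fin m) → SpechtTwoRow K n (r + ↑j + 1)),
    (∀ j, (w' j).1 = rhoPM K n (r + ↑j + 1) g (w j).1) →
    Fmap K n r m w' = rhoPM K n (r+m) g (Fmap K n r m w) := by
  intro m
  induction m with
  | zero => intro w w' _; rw [Fmap_zero, Fmap_zero, map_zero]
  | succ m ih =>
    intro w w' hw
    rw [Fmap_succ, Fmap_succ, map_add]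
    congr 1
    · rw [ih (fun j => w j.castSucc) (fun j => w' j.castSucc) (fun j => hw j.castSucc)]
      exact congrFun (congrArg DFunLike.coe (rho_U (r+m) g))
        (Fmap K n r m fun j => w j.castSucc)
    · exact hw (Fin.last m)

lemma specht_inv (s : ℕ) (g : Equiv.Perm (Fin n)) (x : PM K n (s+1))
    (hx : x ∈ SpechtTwoRow K n (s+1)) : rhoPM K n (s+1) g x ∈ SpechtTwoRow K n (s+1) := by
  rw [spechtMem] at hx ⊢
  have h := congrFun (congrArg DFunLike.coe (rho_psi s (s+1) g)) x
  simp only [LinearMap.comp_apply] at h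
  rw [h, hx, map_zero]

end Bij

/-- Transport a Specht module along an equality of levels. -/
noncomputable def castSpecht {K : Type*} [Field K] {n : ℕ} :
    {a b : ℕ} → a = b → (SpechtTwoRow K n a ≃ₗ[K] SpechtTwoRow K n b)
  | _, _, rfl => LinearEquiv.refl _ _

lemma castSpecht_rho {K : Type*} [Field K] {n : ℕ} {a b : ℕ} (h : a = b)
    (g : Equiv.Perm (Fin n)) (x y : SpechtTwoRow K n a)
    (hxy : (x : PM K n a) = rhoPM K n a g (y : PM K n a)) :
    ((castSpecht h x : SpechtTwoRow K n b) : PM K n b)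
      = rhoPM K n b g ((castSpecht h y : SpechtTwoRow K n b) : PM K n b) := by
  subst h
  exact hxy


set_option maxHeartbeats 1000000 in
/-- The space of `t`-`(n,k)` trades (the kernel of the inclusion matrix `W_{t,k}`)
decomposes, `S_n`-equivariantly, as the multiplicity-free direct sum
`S^{(n−k,k)} ⊕ S^{(n−k+1,k−1)} ⊕ ⋯ ⊕ S^{(n−t−1,t+1)}` of Specht modules. -/
theorem trades_decomposition (K : Type*) [Field K] [CharZero K] (n t k : ℕ)
    (htk : t < k) (hkn : 2 * k ≤ n) :
    ∃ e : LinearMap.ker (psiPM K n t k) ≃ₗ[K]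
        (∀ j : Fin (k - t), SpechtTwoRow K n (t + 1 + j)),
      ∀ (g : Equiv.Perm (Fin n)) (v v' : LinearMap.ker (psiPM K n t k)),
        (v' : PM K n k) = rhoPM K n k g (v : PM K n k) →
        ∀ j : Fin (k - t),
          ((e v' j : PM K n (t + 1 + j)) = rhoPM K n (t + 1 + j) g (e v j : PM K n (t + 1 + j))) := by
  obtain ⟨m, rfl⟩ : ∃ m, k = t + m := ⟨k - t, by omega⟩
  have hkn' : 2 * (t + m) ≤ n := hkn
  have hker : ∀ v : PM K n (t+m), psiPM K n t (t+m) v = 0 ↔ Dpow K n t m v = 0 := by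
    intro v
    rw [Dpow_eq_psiPM]
    constructor
    · intro hv; rw [LinearMap.smul_apply, hv, smul_zero]
    · intro hv
      rw [LinearMap.smul_apply] at hv
      rcases smul_eq_zero.mp hv with h | h
      · exact absurd h (Nat.cast_ne_zero.mpr m.factorial_ne_zero)
      · exact h
  let f : ((j : Fin m) → SpechtTwoRow K n (t+↑j+1)) →ₗ[K] LinearMap.ker (psiPM K n t (t+m)) :=
    LinearMap.codRestrict _ (Fmap K n t m) (fun w => by
      rw [LinearMap.mem_ker, hker]; exact Dpow_Fmap t m w)
  have hbij : Function.Bijective f := by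
    constructor
    · intro w1 w2 hww
      have h1 : Fmap K n t m w1 = Fmap K n t m w2 := congrArg Subtype.val hww
      have h2 := F_inj t m hkn' (w1 - w2) (by rw [map_sub (Fmap K n t m) w1 w2, h1, sub_self])
      exact sub_eq_zero.mp h2
    · intro v
      obtain ⟨w, hw⟩ := F_surj t m hkn' v.1 ((hker v.1).mp (LinearMap.mem_ker.mp v.2))
      exact ⟨w, Subtype.ext hw⟩
  have hfin : t + m - t = m := by omega
  let ec : Fin (t + m - t) ≃ Fin m := finCongr hfin
  have hj : ∀ j : Fin (t + m - t), t + ↑(ec j) + 1 = t + 1 + ↑j := by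
    intro j
    have : (↑(ec j) : ℕ) = ↑j := rfl
    omega
  let E1 := (LinearEquiv.ofBijective f hbij).symm
  let E2 : ((j : Fin m) → SpechtTwoRow K n (t+↑j+1)) ≃ₗ[K]
      ((j : Fin (t+m-t)) → SpechtTwoRow K n (t+1+↑j)) :=
    (LinearEquiv.piCongrLeft' K (fun j : Fin m => SpechtTwoRow K n (t+↑j+1)) ec.symm).trans
      (LinearEquiv.piCongrRight fun j => castSpecht (hj j))
  refine ⟨E1.trans E2, ?_⟩
  intro g v v' hvv' j
  have happ : ∀ u : LinearMap.ker (psiPM K n t (t+m)),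
      (E1.trans E2) u j = castSpecht (hj j) (E1 u (ec j)) := fun u => rfl
  rw [happ v, happ v']
  apply castSpecht_rho
  set w := E1 v with hwdef
  have hfw : Fmap K n t m w = v.1 :=
    congrArg Subtype.val ((LinearEquiv.ofBijective f hbij).apply_symm_apply v)
  set w' : (j : Fin m) → SpechtTwoRow K n (t+↑j+1) :=
    fun j => ⟨rhoPM K n (t+↑j+1) g (w j).1, specht_inv (t+↑j) g _ (w j).2⟩ with hw'
  have hFw' : Fmap K n t m w' = rhoPM K n (t+m) g (Fmap K n t m w) :=
    F_equiv t g m w w' (fun j => rfl)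
  have hfw' : f w' = v' := by
    apply Subtype.ext
    show Fmap K n t m w' = v'.1
    rw [hFw', hfw, ← hvv']
  have hEv' : E1 v' = w' := by
    rw [← hfw']
    exact (LinearEquiv.ofBijective f hbij).symm_apply_apply w'
  rw [hEv']
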